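/- Let N ≥ 2 be an integer, let p be a nonzero integer, and let d be an N-adic rational with 0 < d and d + d·N^{-p} ≤ 1. Define A_{d,p} : [0,1] → [0,1] by A_{d,p}(x) = x/N^p for 0 ≤ x ≤ d, A_{d,p}(x) = x − d + d/N^p for d ≤ x ≤ 1 − d/N^p, and A_{d,p}(x) = N^p·x + 1 − N^p for 1 − d/N^p ≤ x ≤ 1. Then A_{d,p} is a well-defined element of F(N) and has infinite order: for every integer n ≥ 1, the n-fold composition of A_{d,p} with itself is not the identity map of [0,1]. -/

import Mathlib

/-- A real number is an `N`-adic rational if it equals `k / N^m` for some `k : ℤ`, `m : ℕ`. -/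
def IsNAdic (N : ℕ) (x : ℝ) : Prop :=
  ∃ (k : ℤ) (m : ℕ), x = (k : ℝ) / (N : ℝ) ^ m

/-- Membership (as a map of `[0,1]`) in the generalized Thompson group `F(N)`:
`f 0 = 0`, `f 1 = 1`, and there is a finite partition `0 = a 0 < a 1 < ⋯ < a n = 1`
of `[0,1]` by `N`-adic rationals such that on each piece `[a i, a (i+1)]` the map `f`
is affine with slope an integer power of `N`.  (Such an `f` is automatically an
increasing piecewise-linear homeomorphism of `[0,1]` onto itself, with all
non-differentiability points `N`-adic.) -/
def InFN (N : ℕ) (f : ℝ → ℝ) : Prop :=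
  f 0 = 0 ∧ f 1 = 1 ∧
    ∃ (n : ℕ) (a : ℕ → ℝ), 0 < n ∧ a 0 = 0 ∧ a n = 1 ∧
      (∀ i < n, a i < a (i + 1)) ∧
      (∀ i ≤ n, IsNAdic N (a i)) ∧
      (∀ i < n, ∃ q : ℤ, ∀ x ∈ Set.Icc (a i) (a (i + 1)),
        f x = f (a i) + (N : ℝ) ^ q * (x - a i))

/-!
The map `A_{d,p}` is affine with slopes `N^(-p)`, `1`, `N^p` on `[0, d]`, `[d, 1 - d/N^p]`,
`[1 - d/N^p, 1]`, and these breakpoints are `N`-adic, so it lies in `F(N)`. On the outer pieces it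
is a homothety centred at the fixed points `0` and `1` with ratios `N^(-p)` and `N^p`; one of them
is `< 1`, so it moves `d` (for `p > 0`) or `1 - d/N^p` (for `p < 0`) geometrically towards the
fixed point, and no positive iterate returns it.
-/

open Set

lemma isNAdic_zero (N : ℕ) : IsNAdic N 0 := ⟨0, 0, by simp⟩

lemma isNAdic_one (N : ℕ) : IsNAdic N 1 := ⟨1, 0, by simp⟩

lemma IsNAdic.sub {N : ℕ} (hN : N ≠ 0) {x y : ℝ} (hx : IsNAdic N x) (hy : IsNAdic N y) :
    IsNAdic N (x - y) := by
  obtain ⟨k, m, rfl⟩ := hx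
  obtain ⟨l, r, rfl⟩ := hy
  refine ⟨k * N ^ r - l * N ^ m, m + r, ?_⟩
  push_cast
  field_simp
  ring

lemma IsNAdic.mul_zpow {N : ℕ} (hN : N ≠ 0) {x : ℝ} (hx : IsNAdic N x) (q : ℤ) :
    IsNAdic N (x * (N : ℝ) ^ q) := by
  obtain ⟨k, m, rfl⟩ := hx
  obtain ⟨r, rfl | rfl⟩ := q.eq_nat_or_neg
  · exact ⟨k * N ^ r, m, by push_cast; rw [zpow_natCast]; field_simp⟩
  · exact ⟨k, m + r, by rw [zpow_neg, zpow_natCast, pow_add]; field_simp⟩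

/-- The piecewise-affine condition of `InFN` on `[a, b]`; unlike there, the partition may be
empty (`n = 0`, so `a = b`). -/
def IsNAdicPLOn (N : ℕ) (f : ℝ → ℝ) (a b : ℝ) : Prop :=
  ∃ (n : ℕ) (t : ℕ → ℝ), t 0 = a ∧ t n = b ∧
    (∀ i < n, t i < t (i + 1)) ∧
    (∀ i ≤ n, IsNAdic N (t i)) ∧
    (∀ i < n, ∃ q : ℤ, ∀ x ∈ Icc (t i) (t (i + 1)), f x = f (t i) + (N : ℝ) ^ q * (x - t i))

namespace IsNAdicPLOn

variable {N : ℕ} {f : ℝ → ℝ} {a b c : ℝ}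

lemma refl (ha : IsNAdic N a) : IsNAdicPLOn N f a a :=
  ⟨0, fun _ => a, rfl, rfl, by simp, fun _ _ => ha, by simp⟩

lemma snoc (h : IsNAdicPLOn N f a b) (hbc : b < c) (hc : IsNAdic N c)
    (hf : ∃ q : ℤ, ∀ x ∈ Icc b c, f x = f b + (N : ℝ) ^ q * (x - b)) :
    IsNAdicPLOn N f a c := by
  obtain ⟨n, t, ht0, htn, hmono, hadic, hslope⟩ := h
  refine ⟨n + 1, fun i => if i ≤ n then t i else c, by simpa using ht0, by simp, ?_, ?_, ?_⟩
  · intro i hi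
    rcases Nat.lt_succ_iff_lt_or_eq.mp hi with hi | rfl
    · simpa [hi.le, Nat.succ_le_of_lt hi] using hmono i hi
    · simpa [htn] using hbc
  · intro i hi
    rcases Nat.le_succ_iff.mp hi with hi | rfl
    · simpa [hi] using hadic i hi
    · simpa using hc
  · intro i hi
    rcases Nat.lt_succ_iff_lt_or_eq.mp hi with hi | rfl
    · simpa [hi.le, Nat.succ_le_of_lt hi] using hslope i hi
    · simpa [htn] using hf

lemma snoc_of_le (h : IsNAdicPLOn N f a b) (hbc : b ≤ c) (hc : IsNAdic N c)
    (hf : ∃ q : ℤ, ∀ x ∈ Icc b c, f x = f b + (N : ℝ) ^ q * (x - b)) :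
    IsNAdicPLOn N f a c := by
  rcases hbc.eq_or_lt with rfl | hbc
  · exact h
  · exact h.snoc hbc hc hf

lemma inFN (h : IsNAdicPLOn N f 0 1) (h0 : f 0 = 0) (h1 : f 1 = 1) : InFN N f := by
  obtain ⟨n, t, ht0, htn, hmono, hadic, hslope⟩ := h
  refine ⟨h0, h1, n, t, Nat.pos_of_ne_zero ?_, ht0, htn, hmono, hadic, hslope⟩
  rintro rfl
  exact zero_ne_one (ht0.symm.trans htn)

end IsNAdicPLOn

lemma iterate_apply_eq_of_homothety_on {f : ℝ → ℝ} {a b r : ℝ} (hr : r ∈ Icc (0 : ℝ) 1)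
    (hf : ∀ x ∈ uIcc a b, f x = a + r * (x - a)) (n : ℕ) :
    f^[n] b = a + r ^ n * (b - a) := by
  induction n with
  | zero => simp
  | succ n ih =>
    have hmem : a + r ^ n * (b - a) ∈ uIcc a b :=
      (convex_uIcc a b).add_smul_sub_mem left_mem_uIcc right_mem_uIcc
        ⟨pow_nonneg hr.1 n, pow_le_one₀ hr.1 hr.2⟩
    rw [Function.iterate_succ_apply', ih, hf _ hmem]
    ring

lemma iterate_apply_ne_of_homothety_on {f : ℝ → ℝ} {a b r : ℝ} (hab : a ≠ b) (hr0 : 0 ≤ r)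
    (hr1 : r < 1) (hf : ∀ x ∈ uIcc a b, f x = a + r * (x - a)) {n : ℕ} (hn : n ≠ 0) :
    f^[n] b ≠ b := by
  rw [iterate_apply_eq_of_homothety_on ⟨hr0, hr1.le⟩ hf]
  intro h
  have hrn : r ^ n < 1 := pow_lt_one₀ hr0 hr1 hn
  have : (1 - r ^ n) * (b - a) = 0 := by linarith
  exact hab (sub_eq_zero.mp ((mul_eq_zero.mp this).resolve_left (by linarith))).symm

theorem statement0 (N : ℕ) (hN : 2 ≤ N) (p : ℤ) (hp : p ≠ 0) (d : ℝ)
    (hd : IsNAdic N d) (hd0 : 0 < d) (hd1 : d + d * (N : ℝ) ^ (-p) ≤ 1)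
    (A : ℝ → ℝ)
    (hA1 : ∀ x : ℝ, 0 ≤ x → x ≤ d → A x = x / (N : ℝ) ^ p)
    (hA2 : ∀ x : ℝ, d ≤ x → x ≤ 1 - d / (N : ℝ) ^ p → A x = x - d + d / (N : ℝ) ^ p)
    (hA3 : ∀ x : ℝ, 1 - d / (N : ℝ) ^ p ≤ x → x ≤ 1 →
      A x = (N : ℝ) ^ p * x + 1 - (N : ℝ) ^ p) :
    InFN N A ∧ ∀ n : ℕ, 1 ≤ n → ∃ x ∈ Set.Icc (0 : ℝ) 1, A^[n] x ≠ x := by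
  have hN1 : (1 : ℝ) < N := by exact_mod_cast hN
  have hNp : (0 : ℝ) < (N : ℝ) ^ p := zpow_pos (by positivity) p
  set c := d / (N : ℝ) ^ p with hc_def
  have hdc : d * (N : ℝ) ^ (-p) = c := by rw [hc_def, zpow_neg, div_eq_mul_inv]
  have hc0 : 0 < c := div_pos hd0 hNp
  have hA0 : A 0 = 0 := by simpa using hA1 0 le_rfl hd0.le
  have hAc : ∀ x ∈ Icc (1 - c) 1, A x = 1 + (N : ℝ) ^ p * (x - 1) := fun x hx => by
    rw [hA3 x hx.1 hx.2]; ring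
  refine ⟨IsNAdicPLOn.inFN ?_ hA0 (by simpa using hAc 1 ⟨by linarith, le_rfl⟩), fun n hn => ?_⟩
  · have hc : IsNAdic N (1 - c) :=
      hdc ▸ (isNAdic_one N).sub (by omega) (hd.mul_zpow (by omega) _)
    -- the middle piece `[d, 1 - c]` may be a single point
    refine (((IsNAdicPLOn.refl (isNAdic_zero N)).snoc hd0 hd ⟨-p, fun x hx => ?_⟩).snoc_of_le
      (by linarith) hc ⟨0, fun x hx => ?_⟩).snoc (by linarith) (isNAdic_one N) ⟨p, fun x hx => ?_⟩
    · rw [hA1 x hx.1 hx.2, hA0, zpow_neg]; ring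
    · rw [hA2 x hx.1 hx.2, hA1 d hd0.le le_rfl, ← hc_def, zpow_zero]; ring
    · rw [hAc x hx, hAc (1 - c) ⟨le_rfl, by linarith⟩]; ring
  rcases hp.lt_or_gt with hp | hp
  · refine ⟨1 - c, ⟨by linarith, by linarith⟩, iterate_apply_ne_of_homothety_on (a := 1)
      (by linarith) hNp.le (zpow_lt_one_of_neg₀ hN1 hp) (fun x hx => ?_) (by omega)⟩
    exact hAc x (by rwa [uIcc_of_ge (by linarith)] at hx)
  · refine ⟨d, ⟨hd0.le, by linarith⟩, iterate_apply_ne_of_homothety_on (a := 0) hd0.ne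
      (zpow_pos (by positivity) _).le (zpow_lt_one_of_neg₀ hN1 (neg_neg_of_pos hp))
      (fun x hx => ?_) (by omega)⟩
    rw [uIcc_of_le hd0.le] at hx
    rw [hA1 x hx.1 hx.2, zpow_neg]; ring
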